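/- arXiv:2306.05020 — 2 statements merged into one kernel-verified Lean document; each statement's English description precedes it below -/
import Mathlib

section
/- Let $G = C_k$ be the odd cycle with $k = 2\ell+1$ vertices. The only monomials of $t$-degree $\ell+1$ in $\bigcap_{i=1}^k Q_i \subseteq R_G$ are $w_0 = (x_1x_2\cdots x_k)t^{\ell+1}$ and $w_i = (x_1\cdots x_{i-1}x_i^2x_{i+1}\cdots x_k)t^{\ell+1}$ for $i=1,\dots,k$. -/
open MvPolynomial

set_option synthInstance.maxHeartbeats 1000000

noncomputable section

/-- The ambient polynomial ring `K[x_i : i ∈ V][t]`, with the variable `none` playing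
the role of `t`. -/
abbrev Amb (K V : Type*) [CommSemiring K] := MvPolynomial (Option V) K

variable (K : Type*) [Field K] {V : Type*} [DecidableEq V]

/-- The generator `t`. -/
def tGen : Amb K V := X none

/-- The generator `x_i t`. -/
def vGen (i : V) : Amb K V := X (some i) * X none

/-- The generator `x_i x_j t`. -/
def eGen (i j : V) : Amb K V := X (some i) * X (some j) * X none

variable (G : SimpleGraph V)

/-- The toric ring `R_G = K[t, {x_i t}, {x_i x_j t : {i,j} ∈ E(G)}]` of the graph `G`. -/
def RG : Subalgebra K (Amb K V) :=
  Algebra.adjoin K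
    ({tGen K} ∪ Set.range (vGen K (V := V)) ∪ {p | ∃ i j, G.Adj i j ∧ p = eGen K i j})

/-- The faces of the one-dimensional simplicial complex attached to `G`. -/
def IsFace (F : Finset V) : Prop :=
  F = ∅ ∨ (∃ i, F = {i}) ∨ ∃ i j, G.Adj i j ∧ F = {i, j}

/-- The monomial `x_F t`. -/
def faceMon (F : Finset V) : Amb K V := (∏ i ∈ F, X (some i)) * X none

/-- The ideal `P_0 = (t, x_1 t, …, x_n t)` of `R_G`. -/
def P0 : Ideal (RG K G) :=
  Ideal.span {u : RG K G | ((u : Amb K V) = tGen K) ∨ ∃ i, (u : Amb K V) = vGen K i}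

/-- The principal ideal `(t)` of `R_G`. -/
def tIdeal : Ideal (RG K G) := Ideal.span {u : RG K G | (u : Amb K V) = tGen K}

/-- The ideal `P_C` generated by the monomials `x_F t` for faces `F ⊆ C`. -/
def PC (C : Finset V) : Ideal (RG K G) :=
  Ideal.span {u : RG K G | ∃ F : Finset V, IsFace G F ∧ F ⊆ C ∧ (u : Amb K V) = faceMon K F}

/-- The ideal `Q_i` generated by the monomials `x_F t` for faces `F ∋ i`. -/
def Qi (i : V) : Ideal (RG K G) :=
  Ideal.span {u : RG K G | ∃ F : Finset V, IsFace G F ∧ i ∈ F ∧ (u : Amb K V) = faceMon K F}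

/-- A vertex cover of `G`. -/
def IsVertexCover (C : Finset V) : Prop := ∀ ⦃i j⦄, G.Adj i j → i ∈ C ∨ j ∈ C

/-- A minimal vertex cover of `G`. -/
def IsMinVertexCover (C : Finset V) : Prop :=
  IsVertexCover G C ∧ ∀ C' ⊆ C, IsVertexCover G C' → C' = C

/-- An induced odd cycle of `G`, given by an injective cyclic enumeration of its
vertices such that adjacency holds exactly between consecutive vertices. -/
def IsInducedOddCycle {V : Type*} (G : SimpleGraph V) (m : ℕ) (c : ZMod m → V) : Prop :=
  3 ≤ m ∧ Odd m ∧ Function.Injective c ∧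
    ∀ p q : ZMod m, G.Adj (c p) (c q) ↔ (q = p + 1 ∨ p = q + 1)

/-- The monomial `x^a t^b` of the ambient ring. -/
def monom [Fintype V] (a : V → ℕ) (b : ℕ) : Amb K V :=
  (∏ i, X (some i) ^ a i) * X none ^ b

/-- An element of `R_G` which is a monomial. -/
def IsMonomialElt [Fintype V] (u : RG K G) : Prop :=
  ∃ (a : V → ℕ) (b : ℕ), (u : Amb K V) = monom K a b

/-- A monomial ideal of `R_G`. -/
def IsMonomialIdeal [Fintype V] (I : Ideal (RG K G)) : Prop :=
  ∃ S : Set (RG K G), (∀ u ∈ S, IsMonomialElt K G u) ∧ I = Ideal.span S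

/-- A height one ideal of the domain `R_G`: a nonzero prime all of whose properly
contained primes are zero. -/
def HeightOne (I : Ideal (RG K G)) : Prop :=
  I.IsPrime ∧ I ≠ ⊥ ∧ ∀ J : Ideal (RG K G), J.IsPrime → J < I → J = ⊥

/-- The ideal contains the element `t`. -/
def ContainsT (I : Ideal (RG K G)) : Prop := ∃ u ∈ I, (u : Amb K V) = tGen K

/-- The canonical ideal of `R_G` (for `R_G` normal): the intersection of all height one
monomial prime ideals. -/
def canonicalIdeal [Fintype V] : Ideal (RG K G) :=
  sInf {P : Ideal (RG K G) | HeightOne K G P ∧ IsMonomialIdeal K G P}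

/-- `R_G` is Gorenstein: the canonical ideal (= canonical module) is isomorphic to
`R_G` as an `R_G`-module, equivalently it is a principal ideal, i.e. the canonical
class vanishes. -/
def IsGorensteinToric [Fintype V] : Prop :=
  (canonicalIdeal K G).IsPrincipal

/-- The cycle graph `C_k` on `ZMod k`. -/
def cycleG (k : ℕ) : SimpleGraph (ZMod k) where
  Adj i j := i ≠ j ∧ (j = i + 1 ∨ i = j + 1)
  symm := ⟨by rintro i j ⟨h1, h2⟩; exact ⟨h1.symm, h2.symm⟩⟩
  loopless := ⟨by rintro i ⟨h1, _⟩; exact h1 rfl⟩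

/-! Every monomial of `R_G` is a product of face monomials `x_F t` with `|F| ≤ 2`, one for each
power of `t`, so the exponent vector `a` of a monomial `x^a t^b ∈ R_G` satisfies `∑ a ≤ 2b`.
Such a monomial lies in `Q_i` iff `x_i` divides it: one inclusion because every generator of
`Q_i` is divisible by `x_i`, the other because some face of the product then contains `i`.
For `b = ℓ + 1`, membership in every `Q_i` forces `a ≥ 1`, and `∑ a ≤ 2ℓ + 2 = k + 1` leaves
only `a = 1` and `a = 1 + e_i`. -/

open Finset

namespace MvPolynomial

variable {R σ : Type*} [CommSemiring R] {E : Set (σ →₀ ℕ)}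

theorem support_subset_closure_of_mem_adjoin_monomial {p : MvPolynomial σ R}
    (hp : p ∈ Algebra.adjoin R ((monomial · 1) '' E)) :
    (p.support : Set (σ →₀ ℕ)) ⊆ AddSubmonoid.closure E := by
  classical
  induction hp using Algebra.adjoin_induction with
  | mem x hx =>
    obtain ⟨e, he, rfl⟩ := hx
    refine (coe_subset.2 support_monomial_subset).trans ?_
    simpa using AddSubmonoid.subset_closure he
  | algebraMap r =>
    rw [algebraMap_eq, support_C]
    split_ifs <;> simp [zero_mem]
  | add x y _ _ hx hy => exact (coe_subset.2 support_add).trans (by simpa using ⟨hx, hy⟩)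
  | mul x y _ _ hx hy =>
    intro d hd
    obtain ⟨a, ha, b, hb, rfl⟩ := Finset.mem_add.1 (support_mul x y hd)
    exact add_mem (hx ha) (hy hb)

theorem monomial_one_mem_adjoin_monomial {d : σ →₀ ℕ} (hd : d ∈ AddSubmonoid.closure E) :
    monomial d (1 : R) ∈ Algebra.adjoin R ((monomial · 1) '' E) := by
  induction hd using AddSubmonoid.closure_induction with
  | mem e he => exact Algebra.subset_adjoin ⟨e, he, rfl⟩
  | zero => exact one_mem _
  | add d e _ _ hd he => simpa [monomial_mul] using mul_mem hd he

end MvPolynomial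

open MvPolynomial

section FaceExponents

variable {V : Type*}

def faceExp (F : Finset V) : Option V →₀ ℕ :=
  ∑ v ∈ F, Finsupp.single (some v) 1 + Finsupp.single none 1

@[simp] lemma faceExp_none (F : Finset V) : faceExp F none = 1 := by
  simp [faceExp]

@[simp] lemma faceExp_some [DecidableEq V] (F : Finset V) (v : V) :
    faceExp F (some v) = if v ∈ F then 1 else 0 := by
  simp [faceExp, Finsupp.single_apply]

lemma faceMon_eq_monomial (K : Type*) [Field K] (F : Finset V) :
    faceMon K F = monomial (faceExp F) 1 := by
  rw [faceExp, ← mul_one (1 : K), ← monomial_mul, monomial_sum_one]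
  rfl

lemma IsFace.card_le_two [DecidableEq V] {G : SimpleGraph V} {F : Finset V} (hF : IsFace G F) :
    F.card ≤ 2 := by
  rcases hF with rfl | ⟨i, rfl⟩ | ⟨i, j, -, rfl⟩
  · simp
  · simp
  · exact (card_insert_le _ _).trans (by simp)

/-- The monoid of exponent vectors of monomials of `R_G`. -/
def faceExps [DecidableEq V] (G : SimpleGraph V) : AddSubmonoid (Option V →₀ ℕ) :=
  AddSubmonoid.closure (faceExp '' {F | IsFace G F})

end FaceExponents

section ToricRing

variable {K : Type*} [Field K] {V : Type*} [DecidableEq V] {G : SimpleGraph V}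

lemma RG_eq_adjoin_faceMon : RG K G = Algebra.adjoin K (faceMon K '' {F | IsFace G F}) := by
  unfold RG
  congr 1
  ext p
  simp only [Set.mem_union, Set.mem_singleton_iff, Set.mem_range, Set.mem_ofPred_eq,
    Set.mem_image, IsFace]
  constructor
  · rintro ((rfl | ⟨i, rfl⟩) | ⟨i, j, hij, rfl⟩)
    · exact ⟨∅, Or.inl rfl, by simp [faceMon, tGen]⟩
    · exact ⟨{i}, Or.inr (Or.inl ⟨i, rfl⟩), by simp [faceMon, vGen]⟩
    · exact ⟨{i, j}, Or.inr (Or.inr ⟨i, j, hij, rfl⟩), by simp [faceMon, eGen, prod_pair hij.ne]⟩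
  · rintro ⟨F, rfl | ⟨i, rfl⟩ | ⟨i, j, hij, rfl⟩, rfl⟩
    · exact Or.inl (Or.inl (by simp [faceMon, tGen]))
    · exact Or.inl (Or.inr ⟨i, by simp [faceMon, vGen]⟩)
    · exact Or.inr ⟨i, j, hij, by simp [faceMon, eGen, prod_pair hij.ne]⟩

lemma RG_eq_adjoin_monomial :
    RG K G = Algebra.adjoin K ((monomial · 1) '' (faceExp '' {F | IsFace G F})) := by
  rw [RG_eq_adjoin_faceMon, Set.image_image]
  simp only [faceMon_eq_monomial]

lemma support_subset_faceExps {u : Amb K V} (hu : u ∈ RG K G) :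
    (u.support : Set (Option V →₀ ℕ)) ⊆ faceExps G := by
  rw [RG_eq_adjoin_monomial] at hu
  exact support_subset_closure_of_mem_adjoin_monomial hu

lemma monomial_mem_RG {d : Option V →₀ ℕ} (hd : d ∈ faceExps G) :
    monomial d (1 : K) ∈ RG K G := by
  rw [RG_eq_adjoin_monomial]
  exact monomial_one_mem_adjoin_monomial hd

lemma monomial_mem_Qi {d : Option V →₀ ℕ} (hd : d ∈ faceExps G) {i : V} (hi : d (some i) ≠ 0) :
    (⟨monomial d 1, monomial_mem_RG hd⟩ : RG K G) ∈ Qi K G i := by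
  induction hd using AddSubmonoid.closure_induction with
  | mem e he =>
    obtain ⟨F, hF, rfl⟩ := he
    exact Ideal.subset_span ⟨F, hF, by simpa using hi, (faceMon_eq_monomial K F).symm⟩
  | zero => exact absurd rfl hi
  | add d e hd he ihd ihe =>
    have hmul : (⟨monomial (d + e) 1, monomial_mem_RG (add_mem hd he)⟩ : RG K G) =
        ⟨monomial d 1, monomial_mem_RG hd⟩ * ⟨monomial e 1, monomial_mem_RG he⟩ :=
      Subtype.ext (by simp [monomial_mul])
    rw [hmul]
    by_cases hdi : d (some i) = 0
    · exact Ideal.mul_mem_left _ _ (ihe (by simpa [hdi] using hi))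
    · exact Ideal.mul_mem_right _ _ (ihd hdi)

lemma X_dvd_of_mem_Qi {i : V} {u : RG K G} (hu : u ∈ Qi K G i) :
    X (some i) ∣ (u : Amb K V) := by
  have hle : Qi K G i ≤ (Ideal.span {X (some i)}).comap (RG K G).val := by
    refine Ideal.span_le.2 ?_
    rintro _ ⟨F, -, hiF, hu⟩
    simp only [SetLike.mem_coe, Ideal.mem_comap, Subalgebra.coe_val, hu, faceMon,
      Ideal.mem_span_singleton]
    exact dvd_mul_of_dvd_left (dvd_prod_of_mem _ hiF) _
  exact Ideal.mem_span_singleton.1 (hle hu)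

lemma sum_le_two_mul_of_mem_faceExps [Fintype V] {d : Option V →₀ ℕ} (hd : d ∈ faceExps G) :
    ∑ v, d (some v) ≤ 2 * d none := by
  induction hd using AddSubmonoid.closure_induction with
  | mem e he =>
    obtain ⟨F, hF, rfl⟩ := he
    simpa [sum_boole] using hF.card_le_two
  | zero => simp
  | add d e _ _ hd he =>
    simp only [Finsupp.coe_add, Pi.add_apply, sum_add_distrib]
    omega

end ToricRing

section Monomials

variable {K : Type*} [Field K] {V : Type*} [Fintype V]

def monomExp (a : V → ℕ) (b : ℕ) : Option V →₀ ℕ :=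
  Finsupp.equivFunOnFinite.symm fun o => o.elim b a

@[simp] lemma monomExp_none (a : V → ℕ) (b : ℕ) : monomExp a b none = b := rfl

@[simp] lemma monomExp_some (a : V → ℕ) (b : ℕ) (v : V) : monomExp a b (some v) = a v := rfl

lemma monom_eq_monomial (a : V → ℕ) (b : ℕ) : monom K a b = monomial (monomExp a b) 1 := by
  rw [monomial_eq, Finsupp.prod_pow, Fintype.prod_option, map_one, one_mul, monom]
  simp [mul_comm]

variable [DecidableEq V] {G : SimpleGraph V} {u : RG K G} {a : V → ℕ} {b : ℕ}

lemma monomExp_mem_faceExps (hu : (u : Amb K V) = monom K a b) : monomExp a b ∈ faceExps G :=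
  support_subset_faceExps u.2 (by simp [hu, monom_eq_monomial])

lemma mem_Qi_iff_of_coe_eq_monom (hu : (u : Amb K V) = monom K a b) {i : V} :
    u ∈ Qi K G i ↔ a i ≠ 0 := by
  refine ⟨fun h => by simpa [hu, monom_eq_monomial] using X_dvd_of_mem_Qi h, fun h => ?_⟩
  convert monomial_mem_Qi (monomExp_mem_faceExps hu) (by simpa using h)
  rw [hu, monom_eq_monomial]

lemma sum_le_two_mul_of_coe_eq_monom (hu : (u : Amb K V) = monom K a b) :
    ∑ v, a v ≤ 2 * b := by
  simpa using sum_le_two_mul_of_mem_faceExps (monomExp_mem_faceExps hu)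

end Monomials

lemma eq_one_or_eq_ite_of_sum_le_card_add_one {V : Type*} [Fintype V] [DecidableEq V]
    {a : V → ℕ} (hpos : ∀ v, a v ≠ 0) (hsum : ∑ v, a v ≤ Fintype.card V + 1) :
    a = (fun _ => 1) ∨ ∃ m, a = fun v => if v = m then 2 else 1 := by
  obtain ⟨c, rfl⟩ : ∃ c : V → ℕ, a = fun v => c v + 1 :=
    ⟨fun v => a v - 1,
      funext fun v => (Nat.sub_add_cancel (Nat.one_le_iff_ne_zero.2 (hpos v))).symm⟩
  have hc : ∑ v, c v ≤ 1 := by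
    simp only [sum_add_distrib, sum_const, card_univ, smul_eq_mul, mul_one] at hsum
    omega
  by_cases hall : ∀ v, c v = 0
  · exact Or.inl (funext fun v => by rw [hall])
  obtain ⟨m, hm⟩ := not_forall.1 hall
  refine Or.inr ⟨m, funext fun v => ?_⟩
  have hcm : c m ≤ 1 := (single_le_sum (fun _ _ => Nat.zero_le _) (mem_univ m)).trans hc
  split_ifs with hv
  · subst hv; omega
  · have : c m + c v ≤ 1 := by
      rw [← sum_pair (Ne.symm hv)]
      exact (sum_le_sum_of_subset (subset_univ _)).trans hc
    omega

theorem stmt15_general (K : Type*) [Field K] (ℓ : ℕ) :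
    ∀ u : RG K (cycleG (2 * ℓ + 1)),
      ((∃ a : ZMod (2 * ℓ + 1) → ℕ,
          (u : Amb K (ZMod (2 * ℓ + 1))) = monom K a (ℓ + 1)) ∧
        u ∈ ⨅ i, Qi K (cycleG (2 * ℓ + 1)) i) ↔
      ((u : Amb K (ZMod (2 * ℓ + 1))) = monom K (fun _ => 1) (ℓ + 1) ∨
        ∃ i : ZMod (2 * ℓ + 1),
          (u : Amb K (ZMod (2 * ℓ + 1))) =
            monom K (fun j => if j = i then 2 else 1) (ℓ + 1)) := by
  intro u
  constructor
  · rintro ⟨⟨a, ha⟩, hQ⟩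
    have hpos : ∀ i, a i ≠ 0 := fun i =>
      (mem_Qi_iff_of_coe_eq_monom ha).1 (Ideal.mem_iInf.1 hQ i)
    have hsum : ∑ v, a v ≤ Fintype.card (ZMod (2 * ℓ + 1)) + 1 := by
      rw [ZMod.card]
      linarith [sum_le_two_mul_of_coe_eq_monom ha]
    rcases eq_one_or_eq_ite_of_sum_le_card_add_one hpos hsum with rfl | ⟨m, rfl⟩
    · exact Or.inl ha
    · exact Or.inr ⟨m, ha⟩
  · rintro (h | ⟨m, h⟩) <;> refine ⟨⟨_, h⟩, Ideal.mem_iInf.2 fun i => ?_⟩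
    · exact (mem_Qi_iff_of_coe_eq_monom h).2 one_ne_zero
    · exact (mem_Qi_iff_of_coe_eq_monom h).2 (by split_ifs <;> simp)

/-- Let `G = C_k` be the odd cycle with `k = 2ℓ+1` vertices.  The
monomials of `t`-degree `ℓ+1` in `⋂ i, Q_i` are exactly
`w₀ = (x₁⋯x_k) t^{ℓ+1}` and `w_i = (x₁⋯x_{i-1} x_i² x_{i+1}⋯x_k) t^{ℓ+1}`, `i ∈ [k]`. -/
theorem stmt15 (K : Type*) [Field K] (ℓ : ℕ) (hl : 1 ≤ ℓ) :
    ∀ u : RG K (cycleG (2 * ℓ + 1)),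
      ((∃ a : ZMod (2 * ℓ + 1) → ℕ,
          (u : Amb K (ZMod (2 * ℓ + 1))) = monom K a (ℓ + 1)) ∧
        u ∈ ⨅ i, Qi K (cycleG (2 * ℓ + 1)) i) ↔
      ((u : Amb K (ZMod (2 * ℓ + 1))) = monom K (fun _ => 1) (ℓ + 1) ∨
        ∃ i : ZMod (2 * ℓ + 1),
          (u : Amb K (ZMod (2 * ℓ + 1))) =
            monom K (fun j => if j = i then 2 else 1) (ℓ + 1)) :=
  stmt15_general K ℓ
end
end

section
/- Let $G = C_k$ be an odd cycle, $k = 2\ell+1$. Then $w_0 = (x_1\cdots x_k)t^{\ell+1}$ belongs to $P_0 = (t,x_1t,\dots,x_kt)$ and to $P_C$ for every minimal vertex cover $C$ of $G$, while for each $i$, $w_i = (x_1\cdots x_{i-1}x_i^2 x_{i+1}\cdots x_k)t^{\ell+1}$ does not belong to $P_0$. -/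
open MvPolynomial

set_option synthInstance.maxHeartbeats 1000000

noncomputable section

variable (K : Type*) [Field K] {V : Type*} [DecidableEq V]

variable (G : SimpleGraph V)

/-!
Give `x_i` weight `-1` and `t` weight `2`. The generators `t`, `x_i t`, `x_i x_j t` of `R_G` have
weights `2, 1, 0`, so every monomial of an element of `R_G` has weight `≥ 0` and every monomial of
an element of `P₀` has weight `≥ 1`; but `w_i` has weight `2(ℓ+1) - (2ℓ+2) = 0`.

For every `j`, `w₀ = (x_j t) ∏_{s<ℓ} (x_{j+2s+1} x_{j+2s+2} t)`; with `j = 0` this puts `w₀` in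
`P₀`. A vertex cover `C` of an odd cycle contains two consecutive vertices `j, j+1` (otherwise
`i ↦ i + 1` would map `C` onto its complement, forcing `k = 2|C|`), and factoring at `j - 1`
exhibits the generator `x_j x_{j+1} t` of `P_C` as a factor of `w₀`.
-/

open Finset

namespace MvPolynomial

section WeightAtLeast

variable (R : Type*) {σ M : Type*} [CommSemiring R] [AddCommMonoid M] [PartialOrder M]

noncomputable def weightAtLeast (w : σ → M) (n : M) : Submodule R (MvPolynomial σ R) :=
  restrictSupport R {d | n ≤ Finsupp.weight w d}

variable {R} {w : σ → M}

theorem mul_mem_weightAtLeast [IsOrderedAddMonoid M] {p q : MvPolynomial σ R} {m n : M}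
    (hp : p ∈ weightAtLeast R w m) (hq : q ∈ weightAtLeast R w n) :
    p * q ∈ weightAtLeast R w (m + n) := by
  refine restrictSupport_mono R ?_ ((restrictSupport_add R _ _).ge (Submodule.mul_mem_mul hp hq))
  rintro _ ⟨d, hd, e, he, rfl⟩
  exact (add_le_add hd he).trans_eq (map_add _ d e).symm

theorem IsWeightedHomogeneous.mem_weightAtLeast {p : MvPolynomial σ R} {m n : M}
    (hp : IsWeightedHomogeneous w p m) (hnm : n ≤ m) : p ∈ weightAtLeast R w n := by
  have hp' : p ∈ weightedHomogeneousSubmodule R w m := hp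
  rw [weightedHomogeneousSubmodule_eq_finsupp_supported] at hp'
  exact restrictSupport_mono R
    (fun d (hd : Finsupp.weight w d = m) => show n ≤ _ from hd ▸ hnm) hp'

theorem IsWeightedHomogeneous.notMem_weightAtLeast {p : MvPolynomial σ R} {m n : M}
    (hp : IsWeightedHomogeneous w p m) (hp0 : p ≠ 0) (hmn : m < n) : p ∉ weightAtLeast R w n := by
  intro hmem
  obtain ⟨d, hd⟩ := ne_zero_iff.1 hp0
  exact (hp hd ▸ hmem (mem_support_iff.2 hd) : n ≤ m).not_gt hmn

variable (R w)

noncomputable def nonnegWeightSubalgebra [IsOrderedAddMonoid M] : Subalgebra R (MvPolynomial σ R) :=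
  (weightAtLeast R w 0).toSubalgebra ((isWeightedHomogeneous_one R w).mem_weightAtLeast le_rfl)
    fun _ _ hp hq => zero_add (0 : M) ▸ mul_mem_weightAtLeast hp hq

end WeightAtLeast

end MvPolynomial

theorem Subalgebra.mem_ideal_of_coe_eq_mul {R A : Type*} [CommSemiring R] [CommSemiring A]
    [Algebra R A] {S : Subalgebra R A} {I : Ideal S} {u : S} {a b : A} (ha : a ∈ S) (hb : b ∈ S)
    (hbI : (⟨b, hb⟩ : S) ∈ I) (hu : (u : A) = a * b) : u ∈ I := by
  have : u = ⟨a, ha⟩ * ⟨b, hb⟩ := Subtype.ext hu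
  exact this ▸ I.mul_mem_left _ hbI

theorem Finset.prod_range_two_mul_add_one {M : Type*} [CommMonoid M] (g : ℕ → M) (m : ℕ) :
    ∏ r ∈ range (2 * m + 1), g r = g 0 * ∏ s ∈ range m, (g (2 * s + 1) * g (2 * s + 2)) := by
  induction m with
  | zero => simp
  | succ m ih =>
    rw [show 2 * (m + 1) + 1 = 2 * m + 1 + 1 + 1 by ring, prod_range_succ, prod_range_succ, ih,
      prod_range_succ]
    simp only [mul_assoc]

theorem ZMod.prod_univ_eq_prod_range {M : Type*} [CommMonoid M] (n : ℕ) [NeZero n]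
    (f : ZMod n → M) : ∏ i, f i = ∏ r ∈ range n, f r := by
  have himage : (range n).image (Nat.cast : ℕ → ZMod n) = univ :=
    eq_univ_of_forall fun i => mem_image.2 ⟨i.val, mem_range.2 i.val_lt, i.natCast_zmod_val⟩
  rw [← himage, prod_image]
  intro a ha b hb hab
  simpa [ZMod.val_cast_of_lt (mem_range.1 ha), ZMod.val_cast_of_lt (mem_range.1 hb)] using
    congrArg ZMod.val hab

theorem ZMod.prod_univ_odd {M : Type*} [CommMonoid M] (m : ℕ) (f : ZMod (2 * m + 1) → M)
    (j : ZMod (2 * m + 1)) :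
    ∏ i, f i = f j * ∏ s ∈ range m, (f (j + (2 * s + 1 : ℕ)) * f (j + (2 * s + 2 : ℕ))) := by
  rw [← Fintype.prod_equiv (Equiv.addLeft j) (fun i => f (j + i)) f fun _ => rfl,
    ZMod.prod_univ_eq_prod_range, Finset.prod_range_two_mul_add_one]
  simp

theorem cycleG_adj_of_eq_add_one {k : ℕ} [Fact (1 < k)] {i j : ZMod k} (h : j = i + 1) :
    (cycleG k).Adj i j :=
  ⟨fun hij => one_ne_zero (left_eq_add.1 (hij.trans h)), Or.inl h⟩

theorem IsVertexCover.exists_mem_add_one_mem {k : ℕ} [Fact (1 < k)] (hk : Odd k)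
    {C : Finset (ZMod k)} (hC : IsVertexCover (cycleG k) C) : ∃ j ∈ C, j + 1 ∈ C := by
  by_contra! h
  have hmap : C.map (Equiv.addRight (1 : ZMod k)).toEmbedding = Cᶜ := by
    ext i
    have hcov := hC (cycleG_adj_of_eq_add_one (sub_add_cancel i 1).symm)
    have hnot := h (i - 1)
    rw [sub_add_cancel] at hnot
    simp only [mem_map_equiv, mem_compl, Equiv.addRight_symm, Equiv.coe_addRight,
      ← sub_eq_add_neg]
    tauto
  have hcard := congrArg card hmap
  rw [card_map, card_compl, ZMod.card] at hcard
  obtain ⟨r, rfl⟩ := hk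
  omega

section ToricRing

omit [DecidableEq V]

def toricWeight (V : Type*) : Option V → ℤ := fun o => o.elim 2 fun _ => -1

theorem isWeightedHomogeneous_tGen :
    IsWeightedHomogeneous (toricWeight V) (tGen K : Amb K V) 2 :=
  isWeightedHomogeneous_X K _ none

theorem isWeightedHomogeneous_vGen (i : V) :
    IsWeightedHomogeneous (toricWeight V) (vGen K i) 1 :=
  (isWeightedHomogeneous_X K _ (some i)).mul (isWeightedHomogeneous_X K _ none)

theorem isWeightedHomogeneous_eGen (i j : V) :
    IsWeightedHomogeneous (toricWeight V) (eGen K i j) 0 :=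
  ((isWeightedHomogeneous_X K _ (some i)).mul (isWeightedHomogeneous_X K _ (some j))).mul
    (isWeightedHomogeneous_X K _ none)

theorem isWeightedHomogeneous_monom [Fintype V] (a : V → ℕ) (b : ℕ) :
    IsWeightedHomogeneous (toricWeight V) (monom K a b) (2 * b - ∑ i, (a i : ℤ)) := by
  have h := (IsWeightedHomogeneous.prod univ (fun i => X (some i) ^ a i) _ fun i _ =>
    (isWeightedHomogeneous_X K (toricWeight V) (some i)).pow (a i)).mul
    ((isWeightedHomogeneous_X K (toricWeight V) none).pow b)
  rw [monom]
  convert h using 1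
  simp only [toricWeight, Int.reduceNeg, Option.elim_some, Int.nsmul_eq_mul, mul_neg, mul_one,
    sum_neg_distrib, Option.elim_none]
  ring

theorem monom_ne_zero [Fintype V] (a : V → ℕ) (b : ℕ) : monom K a b ≠ 0 := by
  simp [monom, Finset.prod_ne_zero_iff, X_ne_zero]

theorem RG_le_nonnegWeightSubalgebra :
    RG K G ≤ nonnegWeightSubalgebra K (toricWeight V) := by
  refine Algebra.adjoin_le ?_
  rintro _ ((rfl | ⟨i, rfl⟩) | ⟨i, j, -, rfl⟩)
  · exact (isWeightedHomogeneous_tGen K).mem_weightAtLeast (by norm_num)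
  · exact (isWeightedHomogeneous_vGen K i).mem_weightAtLeast zero_le_one
  · exact (isWeightedHomogeneous_eGen K i j).mem_weightAtLeast le_rfl

theorem coe_mem_weightAtLeast_one_of_mem_P0 {u : RG K G} (hu : u ∈ P0 K G) :
    (u : Amb K V) ∈ weightAtLeast K (toricWeight V) 1 := by
  induction hu using Submodule.span_induction with
  | mem x hx =>
    rcases hx with hx | ⟨i, hx⟩ <;> rw [hx]
    · exact (isWeightedHomogeneous_tGen K).mem_weightAtLeast one_le_two
    · exact (isWeightedHomogeneous_vGen K i).mem_weightAtLeast le_rfl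
  | zero => exact zero_mem _
  | add x y _ _ hx hy => exact add_mem hx hy
  | smul r x _ hx =>
    exact zero_add (1 : ℤ) ▸ mul_mem_weightAtLeast (RG_le_nonnegWeightSubalgebra K G r.2) hx

theorem monom_notMem_P0 [Fintype V] {a : V → ℕ} {b : ℕ} (hab : 2 * b ≤ ∑ i, a i)
    {u : RG K G} (hu : (u : Amb K V) = monom K a b) : u ∉ P0 K G := fun hP0 =>
  (isWeightedHomogeneous_monom K a b).notMem_weightAtLeast (monom_ne_zero K a b)
    (by push_cast [← Nat.cast_sum]; omega) (hu ▸ coe_mem_weightAtLeast_one_of_mem_P0 K G hP0)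

theorem vGen_mem_RG (i : V) : vGen K i ∈ RG K G :=
  Algebra.subset_adjoin (Or.inl (Or.inr ⟨i, rfl⟩))

theorem eGen_mem_RG {i j : V} (h : G.Adj i j) : eGen K i j ∈ RG K G :=
  Algebra.subset_adjoin (Or.inr ⟨i, j, h, rfl⟩)

theorem prod_eGen_mem_RG {ι : Type*} (s : Finset ι) {a b : ι → V}
    (hab : ∀ x ∈ s, G.Adj (a x) (b x)) : ∏ x ∈ s, eGen K (a x) (b x) ∈ RG K G :=
  Subalgebra.prod_mem _ fun x hx => eGen_mem_RG K G (hab x hx)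

theorem faceMon_pair [DecidableEq V] {i j : V} (h : i ≠ j) : faceMon K {i, j} = eGen K i j := by
  rw [faceMon, prod_pair h]
  rfl

theorem monom_one_eq_vGen_mul_prod_eGen (m : ℕ) (j : ZMod (2 * m + 1)) :
    monom K (fun _ => 1) (m + 1) =
      vGen K j * ∏ s ∈ range m, eGen K (j + (2 * s + 1 : ℕ)) (j + (2 * s + 2 : ℕ)) := by
  simp only [monom, pow_one, ZMod.prod_univ_odd m (fun i => (X (some i) : Amb K _)) j, vGen,
    eGen, prod_mul_distrib, prod_const, card_range]
  ring

theorem cycleG_adj_pair {m s : ℕ} (hs : s < m) (j : ZMod (2 * m + 1)) :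
    (cycleG (2 * m + 1)).Adj (j + (2 * s + 1 : ℕ)) (j + (2 * s + 2 : ℕ)) :=
  have : Fact (1 < 2 * m + 1) := ⟨by omega⟩
  cycleG_adj_of_eq_add_one (by push_cast; ring)

theorem monom_one_mem_RG (ℓ : ℕ) : monom K (fun _ => 1) (ℓ + 1) ∈ RG K (cycleG (2 * ℓ + 1)) := by
  rw [monom_one_eq_vGen_mul_prod_eGen K ℓ 0]
  exact mul_mem (vGen_mem_RG K _ 0)
    (prod_eGen_mem_RG K _ _ fun _ hs => cycleG_adj_pair (mem_range.1 hs) 0)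

theorem monom_one_mem_P0 (ℓ : ℕ) {u : RG K (cycleG (2 * ℓ + 1))}
    (hu : (u : Amb K (ZMod (2 * ℓ + 1))) = monom K (fun _ => 1) (ℓ + 1)) :
    u ∈ P0 K (cycleG (2 * ℓ + 1)) :=
  Subalgebra.mem_ideal_of_coe_eq_mul
    (prod_eGen_mem_RG K _ _ fun _ hs => cycleG_adj_pair (mem_range.1 hs) 0) (vGen_mem_RG K _ 0)
    (Ideal.subset_span (Or.inr ⟨0, rfl⟩))
    (hu.trans ((monom_one_eq_vGen_mul_prod_eGen K ℓ 0).trans (mul_comm _ _)))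

theorem monom_one_mem_PC {ℓ : ℕ} (hl : 1 ≤ ℓ) {C : Finset (ZMod (2 * ℓ + 1))}
    (hC : IsVertexCover (cycleG (2 * ℓ + 1)) C) {u : RG K (cycleG (2 * ℓ + 1))}
    (hu : (u : Amb K (ZMod (2 * ℓ + 1))) = monom K (fun _ => 1) (ℓ + 1)) :
    u ∈ PC K (cycleG (2 * ℓ + 1)) C := by
  have : Fact (1 < 2 * ℓ + 1) := ⟨by omega⟩
  obtain ⟨j, hj, hj1⟩ := hC.exists_mem_add_one_mem (odd_two_mul_add_one ℓ)
  have hadj : (cycleG (2 * ℓ + 1)).Adj j (j + 1) := cycleG_adj_of_eq_add_one rfl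
  obtain ⟨m, rfl⟩ : ∃ m, ℓ = m + 1 := ⟨ℓ - 1, by omega⟩
  have hfac : monom K (fun _ => 1) (m + 1 + 1) =
      (vGen K (j - 1) * ∏ s ∈ range m,
        eGen K (j - 1 + (2 * (s + 1) + 1 : ℕ)) (j - 1 + (2 * (s + 1) + 2 : ℕ))) *
      eGen K j (j + 1) := by
    rw [monom_one_eq_vGen_mul_prod_eGen K (m + 1) (j - 1), prod_range_succ', mul_assoc]
    congr 3 <;> push_cast <;> ring
  refine Subalgebra.mem_ideal_of_coe_eq_mul
    (mul_mem (vGen_mem_RG K _ _) (prod_eGen_mem_RG K _ _ fun s hs =>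
      cycleG_adj_pair (Nat.succ_lt_succ (mem_range.1 hs)) _))
    (eGen_mem_RG K _ hadj) (Ideal.subset_span ?_) (hu.trans hfac)
  exact ⟨{j, j + 1}, Or.inr (Or.inr ⟨j, j + 1, hadj, rfl⟩),
    insert_subset hj (singleton_subset_iff.2 hj1), (faceMon_pair K hadj.ne).symm⟩

end ToricRing

/-- For the odd cycle `G = C_k`, `k = 2ℓ+1`: the monomial
`w₀ = (x₁⋯x_k) t^{ℓ+1}` belongs to `R_G`, to `P₀ = (t, x₁t, …, x_kt)` and to `P_C`
for every minimal vertex cover `C`; while each `w_i = (x₁⋯x_i²⋯x_k) t^{ℓ+1}` does not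
belong to `P₀`. -/
theorem stmt16 (K : Type*) [Field K] (ℓ : ℕ) (hl : 1 ≤ ℓ) :
    (∃ u : RG K (cycleG (2 * ℓ + 1)),
      (u : Amb K (ZMod (2 * ℓ + 1))) = monom K (fun _ => 1) (ℓ + 1) ∧
      u ∈ P0 K (cycleG (2 * ℓ + 1)) ∧
      ∀ C : Finset (ZMod (2 * ℓ + 1)), IsMinVertexCover (cycleG (2 * ℓ + 1)) C →
        u ∈ PC K (cycleG (2 * ℓ + 1)) C) ∧
    ∀ (i : ZMod (2 * ℓ + 1)) (u : RG K (cycleG (2 * ℓ + 1))),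
      (u : Amb K (ZMod (2 * ℓ + 1))) = monom K (fun j => if j = i then 2 else 1) (ℓ + 1) →
        u ∉ P0 K (cycleG (2 * ℓ + 1)) := by
  refine ⟨⟨⟨_, monom_one_mem_RG K ℓ⟩, rfl, monom_one_mem_P0 K ℓ rfl,
    fun C hC => monom_one_mem_PC K hl hC.1 rfl⟩, fun i u hu => monom_notMem_P0 K _ ?_ hu⟩
  simp only [sum_ite, filter_eq', mem_univ, ↓reduceIte, sum_const, card_singleton, smul_eq_mul,
    one_mul, filter_ne', card_erase_of_mem, card_univ, ZMod.card, add_tsub_cancel_right, mul_one]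
  omega

end
end
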